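/- With g, s_±, f_± as above, one has f_−(v)·f_−(v−2) = 0 for every v ∈ (0,4], and f_+(v)·f_+(v+2) = 0 for every v ∈ [−4,0). Consequently the difference operator (Ω̂²ψ)(v) = −f_+(v)f_+(v+2)ψ(v+4) + [f_+(v)² + f_−(v)²]ψ(v) − f_−(v)f_−(v−2)ψ(v−4) maps any function supported on the semi-lattice {ε + 4n : n ∈ ℕ} (with ε ∈ (0,4]) to a function supported on the same semi-lattice. -/

import Mathlib

/-- g(v) = ||1+1/v|^{1/3} − |1−1/v|^{1/3}|^{−1/2} for v ≠ 0, g(0) = 0. -/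
noncomputable def gLQC (v : ℝ) : ℝ :=
  if v = 0 then 0
  else |(|1 + 1 / v|) ^ ((1 : ℝ) / 3) - (|1 - 1 / v|) ^ ((1 : ℝ) / 3)| ^ (-(1 : ℝ) / 2)

/-- s_+(v) = sgn(v+2) + sgn(v). -/
noncomputable def sPlus (v : ℝ) : ℝ := Real.sign (v + 2) + Real.sign v

/-- s_−(v) = sgn(v−2) + sgn(v). -/
noncomputable def sMinus (v : ℝ) : ℝ := Real.sign (v - 2) + Real.sign v

/-- f_+(v) = g(v+2)·s_+(v)·g(v). -/
noncomputable def fPlus (v : ℝ) : ℝ := gLQC (v + 2) * sPlus v * gLQC v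

/-- f_−(v) = g(v−2)·s_−(v)·g(v). -/
noncomputable def fMinus (v : ℝ) : ℝ := gLQC (v - 2) * sMinus v * gLQC v

/-- The difference operator Ω̂² of loop quantum cosmology. -/
noncomputable def OmegaSq (ψ : ℝ → ℂ) (v : ℝ) : ℂ :=
  -(fPlus v * fPlus (v + 2) : ℝ) * ψ (v + 4)
    + ((fPlus v) ^ 2 + (fMinus v) ^ 2 : ℝ) * ψ v
    - (fMinus v * fMinus (v - 2) : ℝ) * ψ (v - 4)

/-!
`f_−` vanishes on `[0, 2]`: at the endpoints one of its factors `g(v)`, `g(v - 2)` is `g(0) = 0`,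
and inside `s_−(v) = sgn(v - 2) + sgn v = -1 + 1`. Symmetrically `f_+` vanishes on `[-2, 0]`.
For `v ∈ [0, 4]` one of `v`, `v - 2` lies in `[0, 2]`, which kills `f_−(v) f_−(v - 2)`, and likewise
for `f_+(v) f_+(v + 2)` on `[-4, 0]`. Hence the only point off the semi-lattice `ε + 4ℕ` from which
`Ω̂²` could reach into it, `v = ε - 4 ∈ (-4, 0]`, has vanishing coupling `f_+(v) f_+(v + 2)`.
-/

@[simp]
lemma gLQC_zero : gLQC 0 = 0 := by simp [gLQC]

lemma sMinus_eq_zero {v : ℝ} (h0 : 0 < v) (h2 : v < 2) : sMinus v = 0 := by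
  rw [sMinus, Real.sign_of_neg (by linarith), Real.sign_of_pos h0]
  norm_num

lemma sPlus_eq_zero {v : ℝ} (h2 : -2 < v) (h0 : v < 0) : sPlus v = 0 := by
  rw [sPlus, Real.sign_of_pos (by linarith), Real.sign_of_neg h0]
  norm_num

lemma fMinus_eq_zero {v : ℝ} (h0 : 0 ≤ v) (h2 : v ≤ 2) : fMinus v = 0 := by
  obtain rfl | h0 := h0.eq_or_lt
  · simp [fMinus]
  obtain rfl | h2 := h2.eq_or_lt
  · simp [fMinus]
  · simp [fMinus, sMinus_eq_zero h0 h2]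

lemma fPlus_eq_zero {v : ℝ} (h2 : -2 ≤ v) (h0 : v ≤ 0) : fPlus v = 0 := by
  obtain rfl | h0 := h0.eq_or_lt
  · simp [fPlus]
  obtain rfl | h2 := h2.eq_or_lt
  · simp [fPlus]
  · simp [fPlus, sPlus_eq_zero h2 h0]

lemma fMinus_mul_fMinus_sub_two_eq_zero {v : ℝ} (h0 : 0 ≤ v) (h4 : v ≤ 4) :
    fMinus v * fMinus (v - 2) = 0 := by
  rcases le_total v 2 with h | h
  · rw [fMinus_eq_zero h0 h, zero_mul]
  · rw [fMinus_eq_zero (v := v - 2) (by linarith) (by linarith), mul_zero]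

lemma fPlus_mul_fPlus_add_two_eq_zero {v : ℝ} (h4 : -4 ≤ v) (h0 : v ≤ 0) :
    fPlus v * fPlus (v + 2) = 0 := by
  rcases le_total (-2) v with h | h
  · rw [fPlus_eq_zero h h0, zero_mul]
  · rw [fPlus_eq_zero (v := v + 2) (by linarith) (by linarith), mul_zero]

lemma OmegaSq_eq_of_apply_eq_zero {ψ : ℝ → ℂ} {v : ℝ} (hv : ψ v = 0) (hv4 : ψ (v - 4) = 0) :
    OmegaSq ψ v = -(fPlus v * fPlus (v + 2) : ℝ) * ψ (v + 4) := by
  simp [OmegaSq, hv, hv4]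

lemma mem_semilattice_of_sub_four {ε v : ℝ} (h : ∃ n : ℕ, v - 4 = ε + 4 * n) :
    ∃ n : ℕ, v = ε + 4 * n := by
  obtain ⟨n, hn⟩ := h
  exact ⟨n + 1, by push_cast; linarith⟩

lemma eq_sub_four_of_add_four_mem_semilattice {ε v : ℝ} (h : ∃ n : ℕ, v + 4 = ε + 4 * n)
    (hv : ¬ ∃ n : ℕ, v = ε + 4 * n) : v = ε - 4 := by
  obtain ⟨_ | n, hn⟩ := h
  · simp only [CharP.cast_eq_zero, mul_zero, add_zero] at hn
    linarith
  · exact absurd ⟨n, by push_cast at hn; linarith⟩ hv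

/-- f_−(v)f_−(v−2) = 0 on (0,4], f_+(v)f_+(v+2) = 0 on [−4,0), and consequently
Ω̂² preserves the support on any semi-lattice {ε+4n : n ∈ ℕ} with ε ∈ (0,4]. -/
theorem OmegaSq_preserves_semilattice :
    (∀ v : ℝ, 0 < v → v ≤ 4 → fMinus v * fMinus (v - 2) = 0) ∧
    (∀ v : ℝ, -4 ≤ v → v < 0 → fPlus v * fPlus (v + 2) = 0) ∧
    (∀ ε : ℝ, 0 < ε → ε ≤ 4 → ∀ ψ : ℝ → ℂ,
      (∀ v : ℝ, (¬ ∃ n : ℕ, v = ε + 4 * n) → ψ v = 0) →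
      ∀ v : ℝ, (¬ ∃ n : ℕ, v = ε + 4 * n) → OmegaSq ψ v = 0) := by
  refine ⟨fun v h0 h4 => fMinus_mul_fMinus_sub_two_eq_zero h0.le h4,
    fun v h4 h0 => fPlus_mul_fPlus_add_two_eq_zero h4 h0.le, ?_⟩
  intro ε hε hε4 ψ hψ v hv
  rw [OmegaSq_eq_of_apply_eq_zero (hψ v hv) (hψ _ (mt mem_semilattice_of_sub_four hv))]
  by_cases hv4 : ∃ n : ℕ, v + 4 = ε + 4 * n
  · obtain rfl := eq_sub_four_of_add_four_mem_semilattice hv4 hv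
    rw [fPlus_mul_fPlus_add_two_eq_zero (by linarith) (by linarith)]
    simp
  · simp [hψ _ hv4]
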